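/- Let m > 2 be an integer, α = 2/m, d ≥ 1, let D ⊆ ℝ^d be a bounded open set, x ∈ D, let q be a positive integer, M > 1, and let a_0(q), …, a_q(q) be real constants realizing the scaling-derivative identity for exponent 2/α. Then sup_{0<t≤1} sup_{y ∈ D^c} | t^{-q−2/α} ∑_{j=0}^q a_j(q) ∫_{M t^{2/α}}^∞ s^j g(s,x,y) (∂^j/∂s^j)( ∑_{k=1}^q γ_k (t^{-2/α}s)^{-kα/2−1} ) ds | < ∞, and for each y ∈ D^c the expression inside the absolute value converges to q! · γ_q ∫_0^∞ s^{-qα/2−1} g(s,x,y) ds as t → 0⁺. -/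

import Mathlib

open Real MeasureTheory Set Filter Topology

/-- The coefficients `γ_k = ((-1)^{k+1} Γ(kα/2+1)/(π k!)) sin(πkα/2)`. -/
noncomputable def gam (α : ℝ) (k : ℕ) : ℝ :=
  ((-1 : ℝ) ^ (k + 1) * Real.Gamma ((k : ℝ) * α / 2 + 1) / (π * k.factorial)) *
    Real.sin (π * k * α / 2)

/-- The Gaussian kernel `g(s,x,y) = (4πs)^{-d/2} exp(-|x-y|²/(4s))`. -/
noncomputable def gauss (d : ℕ) (s : ℝ) (x y : EuclideanSpace ℝ (Fin d)) : ℝ :=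
  (4 * π * s) ^ (-(d : ℝ) / 2) * Real.exp (-‖x - y‖ ^ 2 / (4 * s))

/-- The constants `a_0(q), …, a_q(q)` realize the scaling-derivative identity for
exponent `β > 0` if for every `q`-times continuously differentiable `h : (0,∞) → ℝ`
and all `s, t > 0`,
`(∂^q/∂t^q)[t^{-β} h(t^{-β}s)] = ∑_{j=0}^q a_j(q) t^{-β-q} (t^{-β}s)^j h^{(j)}(t^{-β}s)`. -/
def RealizesScalingDerivIdentity (β : ℝ) (q : ℕ) (a : ℕ → ℝ) : Prop :=
  ∀ h : ℝ → ℝ, ContDiffOn ℝ (q : ℕ∞) h (Set.Ioi 0) →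
    ∀ s : ℝ, 0 < s → ∀ t : ℝ, 0 < t →
      iteratedDeriv q (fun u : ℝ => u ^ (-β) * h (u ^ (-β) * s)) t =
        ∑ j ∈ Finset.range (q + 1),
          a j * t ^ (-β - q) * (t ^ (-β) * s) ^ j * iteratedDeriv j h (t ^ (-β) * s)

section Aux

open Real MeasureTheory Set Filter Topology

lemma iteratedDeriv_sum_rpow (K : Finset ℕ) (b p : ℕ → ℝ) (j : ℕ) :
    ∀ x : ℝ, 0 < x →
    iteratedDeriv j (fun u : ℝ => ∑ k ∈ K, b k * u ^ (p k)) x =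
      ∑ k ∈ K, b k * (∏ i ∈ Finset.range j, (p k - i)) * x ^ (p k - j) := by
  induction j with
  | zero =>
    intro x hx
    simp [iteratedDeriv_zero]
  | succ j ih =>
    intro x hx
    rw [iteratedDeriv_succ]
    have hev : iteratedDeriv j (fun u : ℝ => ∑ k ∈ K, b k * u ^ (p k)) =ᶠ[nhds x]
        fun u => ∑ k ∈ K, b k * (∏ i ∈ Finset.range j, (p k - i)) * u ^ (p k - j) := by
      filter_upwards [Ioi_mem_nhds hx] with u hu
      exact ih u hu
    rw [hev.deriv_eq]
    rw [deriv_fun_sum (fun k _ => by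
      exact (((Real.hasDerivAt_rpow_const (p := p k - j) (Or.inl (ne_of_gt hx)))).const_mul
        (b k * ∏ i ∈ Finset.range j, (p k - i))).differentiableAt)]
    refine Finset.sum_congr rfl fun k _ => ?_
    rw [deriv_const_mul _ ((Real.hasDerivAt_rpow_const (p := p k - j)
      (Or.inl (ne_of_gt hx)))).differentiableAt]
    rw [Real.deriv_rpow_const x (p k - j)]
    rw [Finset.prod_range_succ]
    have h1 : p k - ((j : ℝ) + 1) = p k - j - 1 := by ring
    push_cast
    rw [h1]
    ring

lemma prod_range_cast_sub (q : ℕ) :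
    ∏ i ∈ Finset.range q, ((q : ℝ) - i) = (q.factorial : ℝ) := by
  have h := Finset.prod_range_reflect (fun i => ((q : ℝ) - i)) q
  rw [← h, ← Finset.prod_range_add_one_eq_factorial q]
  push_cast
  refine Finset.prod_congr rfl fun j hj => ?_
  have hj' : j < q := Finset.mem_range.mp hj
  have : (↑(q - 1 - j) : ℝ) = (q : ℝ) - 1 - j := by
    have h1 : j ≤ q - 1 := Nat.le_sub_one_of_lt hj'
    have h2 : (1:ℕ) ≤ q := Nat.one_le_of_lt hj'
    push_cast [Nat.cast_sub h1, Nat.cast_sub h2]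
    ring
  rw [this]
  ring

lemma key_pointwise (α : ℝ) (hα : 0 < α) (q : ℕ) (hq : 0 < q) (a : ℕ → ℝ)
    (ha : RealizesScalingDerivIdentity (2/α) q a) (t : ℝ) (ht : 0 < t)
    (s : ℝ) (hs : 0 < s) :
    ∑ j ∈ Finset.range (q+1), a j * t ^ (-(q:ℝ) - 2/α) * s ^ j *
      iteratedDeriv j (fun s' : ℝ => ∑ k ∈ Finset.Icc 1 q,
        gam α k * (t ^ (-2/α) * s') ^ (-(k:ℝ) * α / 2 - 1)) s
    = (q.factorial : ℝ) * gam α q * s ^ (-(q:ℝ) * α / 2 - 1) := by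
  set β : ℝ := 2/α with hβdef
  have hβ : 0 < β := by positivity
  set φ : ℝ → ℝ := fun u => ∑ k ∈ Finset.Icc 1 q,
    gam α k * u ^ (-(k:ℝ) * α / 2 - 1) with hφdef
  have hφ : ContDiffOn ℝ (q : ℕ∞) φ (Set.Ioi 0) := by
    refine ContDiffOn.sum fun k _ => ContDiffOn.mul contDiffOn_const ?_
    intro u hu
    exact (Real.contDiffAt_rpow_const_of_ne (ne_of_gt hu)).contDiffWithinAt
  have hid := ha φ hφ s hs t ht
  have hneg : ∀ u : ℝ, 0 < u → (0:ℝ) < u ^ (-β) := fun u hu => Real.rpow_pos_of_pos hu _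
  have hLHSfun : (fun u : ℝ => u ^ (-β) * φ (u ^ (-β) * s)) =ᶠ[nhds t]
      fun u => ∑ k ∈ Finset.Icc 1 q,
        (gam α k * s ^ (-(k:ℝ) * α / 2 - 1)) * u ^ ((k:ℕ):ℝ) := by
    filter_upwards [Ioi_mem_nhds ht] with u hu
    have hu0 : (0:ℝ) < u := hu
    simp only [hφdef, Finset.mul_sum]
    refine Finset.sum_congr rfl fun k hk => ?_
    rw [Real.mul_rpow (le_of_lt (hneg u hu0)) (le_of_lt hs)]
    rw [← Real.rpow_mul (le_of_lt hu0)]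
    rw [show u ^ (-β) * (gam α k * (u ^ (-β * (-(k:ℝ) * α / 2 - 1)) *
          s ^ (-(k:ℝ) * α / 2 - 1))) =
        (u ^ (-β) * u ^ (-β * (-(k:ℝ) * α / 2 - 1))) *
          (gam α k * s ^ (-(k:ℝ) * α / 2 - 1)) by ring]
    rw [← Real.rpow_add hu0]
    have hexp : -β + -β * (-(k:ℝ) * α / 2 - 1) = ((k:ℕ):ℝ) := by
      rw [hβdef]
      field_simp
      ring
    rw [hexp]
    ring
  have hLHS : iteratedDeriv q (fun u : ℝ => u ^ (-β) * φ (u ^ (-β) * s)) t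
      = (q.factorial : ℝ) * gam α q * s ^ (-(q:ℝ) * α / 2 - 1) := by
    rw [hLHSfun.iteratedDeriv_eq q]
    rw [iteratedDeriv_sum_rpow (Finset.Icc 1 q)
      (fun k => gam α k * s ^ (-(k:ℝ) * α / 2 - 1)) (fun k => ((k:ℕ):ℝ)) q t ht]
    rw [Finset.sum_eq_single_of_mem q (Finset.mem_Icc.mpr ⟨hq, le_refl q⟩)]
    · rw [prod_range_cast_sub, sub_self, Real.rpow_zero]
      ring
    · intro k hk hkq
      have hklt : k < q := lt_of_le_of_ne (Finset.mem_Icc.mp hk).2 hkq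
      rw [Finset.prod_eq_zero (Finset.mem_range.mpr hklt) (sub_self ((k:ℝ)))]
      ring
  rw [hLHS] at hid
  rw [hid]
  refine Finset.sum_congr rfl fun j hj => ?_
  have hc : (0:ℝ) < t ^ (-β) := hneg t ht
  have hcs : (0:ℝ) < t ^ (-β) * s := mul_pos hc hs
  have hβeq : (-2 : ℝ)/α = -β := by rw [hβdef]; ring
  have hDφ : iteratedDeriv j φ (t ^ (-β) * s) =
      ∑ k ∈ Finset.Icc 1 q, gam α k *
        (∏ i ∈ Finset.range j, ((-(k:ℝ) * α / 2 - 1) - i)) *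
        (t ^ (-β) * s) ^ ((-(k:ℝ) * α / 2 - 1) - j) :=
    iteratedDeriv_sum_rpow (Finset.Icc 1 q) (fun k => gam α k)
      (fun k => -(k:ℝ) * α / 2 - 1) j _ hcs
  have hht : (fun s' : ℝ => ∑ k ∈ Finset.Icc 1 q,
        gam α k * (t ^ ((-2:ℝ)/α) * s') ^ (-(k:ℝ) * α / 2 - 1)) =ᶠ[nhds s]
      fun s' => ∑ k ∈ Finset.Icc 1 q,
        (gam α k * (t ^ (-β)) ^ (-(k:ℝ) * α / 2 - 1)) * s' ^ (-(k:ℝ) * α / 2 - 1) := by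
    filter_upwards [Ioi_mem_nhds hs] with u hu
    refine Finset.sum_congr rfl fun k hk => ?_
    rw [hβeq, Real.mul_rpow (le_of_lt hc) (le_of_lt (show (0:ℝ) < u from hu))]
    ring
  have hDh : iteratedDeriv j (fun s' : ℝ => ∑ k ∈ Finset.Icc 1 q,
        gam α k * (t ^ ((-2:ℝ)/α) * s') ^ (-(k:ℝ) * α / 2 - 1)) s =
      ∑ k ∈ Finset.Icc 1 q, (gam α k * (t ^ (-β)) ^ (-(k:ℝ) * α / 2 - 1)) *
        (∏ i ∈ Finset.range j, ((-(k:ℝ) * α / 2 - 1) - i)) *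
        s ^ ((-(k:ℝ) * α / 2 - 1) - j) := by
    rw [hht.iteratedDeriv_eq j]
    exact iteratedDeriv_sum_rpow (Finset.Icc 1 q)
      (fun k => gam α k * (t ^ (-β)) ^ (-(k:ℝ) * α / 2 - 1))
      (fun k => -(k:ℝ) * α / 2 - 1) j _ hs
  rw [hDh, hDφ]
  simp only [Finset.mul_sum]
  refine Finset.sum_congr rfl fun k hk => ?_
  have e1 : ((t ^ (-β) * s : ℝ)) ^ j * (t ^ (-β) * s) ^ ((-(k:ℝ) * α / 2 - 1) - (j:ℝ))
      = (t ^ (-β)) ^ (-(k:ℝ) * α / 2 - 1) * s ^ (-(k:ℝ) * α / 2 - 1) := by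
    rw [← Real.rpow_natCast (t ^ (-β) * s) j, ← Real.rpow_add hcs]
    rw [show (j:ℝ) + ((-(k:ℝ) * α / 2 - 1) - (j:ℝ)) = -(k:ℝ) * α / 2 - 1 by ring]
    rw [Real.mul_rpow (le_of_lt hc) (le_of_lt hs)]
  have e2 : (s:ℝ) ^ j * s ^ ((-(k:ℝ) * α / 2 - 1) - (j:ℝ)) = s ^ (-(k:ℝ) * α / 2 - 1) := by
    rw [← Real.rpow_natCast s j, ← Real.rpow_add hs]
    rw [show (j:ℝ) + ((-(k:ℝ) * α / 2 - 1) - (j:ℝ)) = -(k:ℝ) * α / 2 - 1 by ring]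
  have e3 : t ^ (-(q:ℝ) - β) = t ^ (-β - (q:ℝ)) := by
    rw [show -(q:ℝ) - β = -β - (q:ℝ) by ring]
  calc a j * t ^ (-(q:ℝ) - β) * s ^ j *
        ((gam α k * (t ^ (-β)) ^ (-(k:ℝ) * α / 2 - 1)) *
          (∏ i ∈ Finset.range j, ((-(k:ℝ) * α / 2 - 1) - i)) *
          s ^ ((-(k:ℝ) * α / 2 - 1) - (j:ℝ)))
      = a j * t ^ (-(q:ℝ) - β) *
        (gam α k * (∏ i ∈ Finset.range j, ((-(k:ℝ) * α / 2 - 1) - i))) *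
        ((t ^ (-β)) ^ (-(k:ℝ) * α / 2 - 1) *
          (s ^ j * s ^ ((-(k:ℝ) * α / 2 - 1) - (j:ℝ)))) := by ring
    _ = a j * t ^ (-β - (q:ℝ)) *
        (gam α k * (∏ i ∈ Finset.range j, ((-(k:ℝ) * α / 2 - 1) - i))) *
        ((t ^ (-β) * s) ^ j * (t ^ (-β) * s) ^ ((-(k:ℝ) * α / 2 - 1) - (j:ℝ))) := by
        rw [e1, e2, e3]
    _ = a j * t ^ (-β - (q:ℝ)) * (t ^ (-β) * s) ^ j *
        (gam α k * (∏ i ∈ Finset.range j, ((-(k:ℝ) * α / 2 - 1) - i)) *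
          (t ^ (-β) * s) ^ ((-(k:ℝ) * α / 2 - 1) - (j:ℝ))) := by ring

lemma continuousOn_rpow_gauss (d : ℕ) (x y : EuclideanSpace ℝ (Fin d)) (p : ℝ) :
    ContinuousOn (fun s : ℝ => s ^ p * gauss d s x y) (Ioi (0:ℝ)) := by
  unfold gauss
  refine ContinuousOn.mul (continuousOn_id.rpow_const fun s hs => Or.inl (ne_of_gt hs)) ?_
  refine ContinuousOn.mul ?_ ?_
  · exact (continuous_const.mul continuous_id).continuousOn.rpow_const
      fun s hs => Or.inl (by
        have : (0:ℝ) < s := hs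
        show 4 * π * s ≠ 0
        positivity)
  · refine Real.continuous_exp.comp_continuousOn ?_
    refine ContinuousOn.div continuousOn_const
      ((continuous_const.mul continuous_id).continuousOn) ?_
    intro s hs
    have : (0:ℝ) < s := hs
    positivity

lemma gauss_nonneg (d : ℕ) (x y : EuclideanSpace ℝ (Fin d)) (s : ℝ) (hs : 0 < s) :
    0 ≤ gauss d s x y := by
  unfold gauss
  positivity

lemma integrableOn_rpow_exp_inv (a b : ℝ) (hab : a < -1) (hb : 0 < b) :
    IntegrableOn (fun s : ℝ => s ^ a * Real.exp (-b/s)) (Ioi (0:ℝ)) := by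
  have hcont : ContinuousOn (fun s : ℝ => s ^ a * Real.exp (-b/s)) (Ioi (0:ℝ)) := by
    refine ContinuousOn.mul (continuousOn_id.rpow_const fun s hs => Or.inl (ne_of_gt hs)) ?_
    exact Real.continuous_exp.comp_continuousOn
      (ContinuousOn.div continuousOn_const continuousOn_id fun s hs => ne_of_gt hs)
  rw [show Ioi (0:ℝ) = Ioc (0:ℝ) 1 ∪ Ioi 1 from (Set.Ioc_union_Ioi_eq_Ioi zero_le_one).symm]
  refine IntegrableOn.union ?_ ?_
  · set n : ℕ := ⌈-a⌉₊ with hn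
    have hna : -a ≤ (n:ℝ) := Nat.le_ceil _
    refine Integrable.mono' (integrable_const ((n.factorial : ℝ) / b ^ n)) ?_ ?_
    · exact (hcont.mono (Set.Ioc_subset_Ioi_self)).aestronglyMeasurable measurableSet_Ioc
    · filter_upwards [ae_restrict_mem measurableSet_Ioc] with s hs
      obtain ⟨hs0, hs1⟩ := hs
      have hsp : (0:ℝ) < s ^ a := Real.rpow_pos_of_pos hs0 _
      have hexp_pos : (0:ℝ) < Real.exp (-b/s) := Real.exp_pos _
      rw [Real.norm_eq_abs, abs_of_pos (mul_pos hsp hexp_pos)]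
      have hbs : (0:ℝ) < b / s := div_pos hb hs0
      have h1 : (b/s) ^ n / (n.factorial : ℝ) ≤ Real.exp (b/s) := by
        calc (b/s) ^ n / (n.factorial : ℝ)
            ≤ ∑ i ∈ Finset.range (n+1), (b/s) ^ i / (i.factorial : ℝ) := by
              refine Finset.single_le_sum (f := fun i => (b/s)^i / (i.factorial : ℝ))
                (fun i _ => by positivity) (Finset.self_mem_range_succ n)
          _ ≤ Real.exp (b/s) := by
              simpa using Real.sum_le_exp_of_nonneg (le_of_lt hbs) (n+1)
      have h2 : Real.exp (-b/s) ≤ (n.factorial : ℝ) * (s/b) ^ n := by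
        rw [show -b/s = -(b/s) by ring, Real.exp_neg]
        rw [show (n.factorial : ℝ) * (s/b)^n = ((b/s)^n / (n.factorial : ℝ))⁻¹ by
          rw [div_pow, div_pow]
          field_simp]
        exact inv_anti₀ (by positivity) h1
      calc s ^ a * Real.exp (-b/s) ≤ s ^ a * ((n.factorial : ℝ) * (s/b) ^ n) := by
            exact mul_le_mul_of_nonneg_left h2 (le_of_lt hsp)
        _ = ((n.factorial : ℝ) / b ^ n) * (s ^ a * s ^ (n:ℝ)) := by
            rw [div_pow, Real.rpow_natCast]
            field_simp
        _ = ((n.factorial : ℝ) / b ^ n) * s ^ (a + (n:ℝ)) := by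
            rw [← Real.rpow_add hs0]
        _ ≤ ((n.factorial : ℝ) / b ^ n) * 1 := by
            refine mul_le_mul_of_nonneg_left ?_ (by positivity)
            exact Real.rpow_le_one (le_of_lt hs0) hs1 (by linarith)
        _ = (n.factorial : ℝ) / b ^ n := mul_one _
  · refine Integrable.mono' (integrableOn_Ioi_rpow_of_lt hab one_pos) ?_ ?_
    · exact (hcont.mono fun s (hs : s ∈ Ioi (1:ℝ)) => mem_Ioi.mpr (lt_trans one_pos (mem_Ioi.mp hs))).aestronglyMeasurable measurableSet_Ioi
    · filter_upwards [ae_restrict_mem measurableSet_Ioi] with s hs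
      have hs0 : (0:ℝ) < s := lt_trans one_pos hs
      have hsp : (0:ℝ) < s ^ a := Real.rpow_pos_of_pos hs0 _
      rw [Real.norm_eq_abs, abs_of_pos (mul_pos hsp (Real.exp_pos _))]
      calc s ^ a * Real.exp (-b/s) ≤ s ^ a * 1 := by
            refine mul_le_mul_of_nonneg_left ?_ (le_of_lt hsp)
            rw [Real.exp_le_one_iff]
            have : (0:ℝ) < b / s := div_pos hb hs0
            rw [neg_div]
            linarith
        _ = s ^ a := mul_one _

lemma rpow_gauss_le (d : ℕ) (x y : EuclideanSpace ℝ (Fin d)) (ε p : ℝ) (hε : 0 < ε)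
    (hxy : ε ≤ ‖x - y‖) (s : ℝ) (hs : 0 < s) :
    s ^ p * gauss d s x y ≤
      (4*π) ^ (-(d:ℝ)/2) * (s ^ (p - (d:ℝ)/2) * Real.exp (-(ε^2/4)/s)) := by
  unfold gauss
  have h4pi : (0:ℝ) ≤ 4 * π := by positivity
  have hsplit : (4 * π * s) ^ (-(d:ℝ)/2) = (4*π) ^ (-(d:ℝ)/2) * s ^ (-(d:ℝ)/2) :=
    Real.mul_rpow h4pi (le_of_lt hs)
  have hcmb : s ^ p * s ^ (-(d:ℝ)/2) = s ^ (p - (d:ℝ)/2) := by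
    rw [← Real.rpow_add hs]; ring_nf
  have hexp : Real.exp (-‖x - y‖ ^ 2 / (4 * s)) ≤ Real.exp (-(ε^2/4)/s) := by
    rw [Real.exp_le_exp]
    rw [show (-(ε^2/4):ℝ)/s = -ε^2/(4*s) by ring]
    have hsq : ε^2 ≤ ‖x - y‖^2 := by
      have := pow_le_pow_left₀ (le_of_lt hε) hxy 2
      simpa using this
    have h4s : (0:ℝ) < 4*s := by positivity
    rw [div_le_div_iff₀ h4s h4s]
    nlinarith
  calc s ^ p * ((4 * π * s) ^ (-(d:ℝ)/2) * Real.exp (-‖x - y‖ ^ 2 / (4 * s)))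
      ≤ s ^ p * ((4 * π * s) ^ (-(d:ℝ)/2) * Real.exp (-(ε^2/4)/s)) := by
        refine mul_le_mul_of_nonneg_left (mul_le_mul_of_nonneg_left hexp ?_) ?_
        · positivity
        · exact le_of_lt (Real.rpow_pos_of_pos hs _)
    _ = (4*π) ^ (-(d:ℝ)/2) * (s ^ (p - (d:ℝ)/2) * Real.exp (-(ε^2/4)/s)) := by
        rw [hsplit, ← hcmb]; ring

lemma integrableOn_rpow_gauss_Ioi (d : ℕ) (hd : 1 ≤ d) (x y : EuclideanSpace ℝ (Fin d))
    (p : ℝ) (hp : p ≤ -1) (c : ℝ) (hc : 0 < c) :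
    IntegrableOn (fun s : ℝ => s ^ p * gauss d s x y) (Ioi c) := by
  have hd' : (1:ℝ) ≤ (d:ℝ) := by exact_mod_cast hd
  refine Integrable.mono'
    (g := fun s => (4*π) ^ (-(d:ℝ)/2) * s ^ (p - (d:ℝ)/2))
    (((integrableOn_Ioi_rpow_of_lt (by linarith) hc)).const_mul _) ?_ ?_
  · exact ((continuousOn_rpow_gauss d x y p).mono
      (fun s hs => lt_trans hc hs)).aestronglyMeasurable measurableSet_Ioi
  · filter_upwards [ae_restrict_mem measurableSet_Ioi] with s hs
    have hs0 : (0:ℝ) < s := lt_trans hc hs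
    have hnn : 0 ≤ s ^ p * gauss d s x y :=
      mul_nonneg (le_of_lt (Real.rpow_pos_of_pos hs0 _)) (gauss_nonneg d x y s hs0)
    rw [Real.norm_eq_abs, abs_of_nonneg hnn]
    unfold gauss
    have hexp1 : Real.exp (-‖x - y‖ ^ 2 / (4 * s)) ≤ 1 := by
      rw [Real.exp_le_one_iff]
      have h1 : (0:ℝ) ≤ ‖x - y‖^2 := by positivity
      have h2 : (0:ℝ) < 4 * s := by positivity
      rw [neg_div]
      simp only [Left.neg_nonpos_iff]
      positivity
    have hsplit : (4 * π * s) ^ (-(d:ℝ)/2) = (4*π) ^ (-(d:ℝ)/2) * s ^ (-(d:ℝ)/2) :=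
      Real.mul_rpow (by positivity) (le_of_lt hs0)
    calc s ^ p * ((4 * π * s) ^ (-(d:ℝ)/2) * Real.exp (-‖x - y‖ ^ 2 / (4 * s)))
        ≤ s ^ p * ((4 * π * s) ^ (-(d:ℝ)/2) * 1) := by
          refine mul_le_mul_of_nonneg_left (mul_le_mul_of_nonneg_left hexp1 ?_) ?_
          · exact le_of_lt (Real.rpow_pos_of_pos (by positivity) _)
          · exact le_of_lt (Real.rpow_pos_of_pos hs0 _)
      _ = (4*π) ^ (-(d:ℝ)/2) * (s ^ p * s ^ (-(d:ℝ)/2)) := by rw [hsplit]; ring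
      _ = (4*π) ^ (-(d:ℝ)/2) * s ^ (p - (d:ℝ)/2) := by
          rw [← Real.rpow_add hs0]; ring_nf

lemma Dh_eval (α : ℝ) (q : ℕ) (t : ℝ) (ht : 0 < t) (j : ℕ) (s : ℝ) (hs : 0 < s) :
    iteratedDeriv j (fun s' : ℝ => ∑ k ∈ Finset.Icc 1 q,
        gam α k * (t ^ (-2/α) * s') ^ (-(k:ℝ) * α / 2 - 1)) s =
      ∑ k ∈ Finset.Icc 1 q, (gam α k * (t ^ ((-2:ℝ)/α)) ^ (-(k:ℝ) * α / 2 - 1)) *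
        (∏ i ∈ Finset.range j, ((-(k:ℝ) * α / 2 - 1) - i)) *
        s ^ ((-(k:ℝ) * α / 2 - 1) - j) := by
  have hc : (0:ℝ) < t ^ ((-2:ℝ)/α) := Real.rpow_pos_of_pos ht _
  have hht : (fun s' : ℝ => ∑ k ∈ Finset.Icc 1 q,
        gam α k * (t ^ ((-2:ℝ)/α) * s') ^ (-(k:ℝ) * α / 2 - 1)) =ᶠ[nhds s]
      fun s' => ∑ k ∈ Finset.Icc 1 q,
        (gam α k * (t ^ ((-2:ℝ)/α)) ^ (-(k:ℝ) * α / 2 - 1)) * s' ^ (-(k:ℝ) * α / 2 - 1) := by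
    filter_upwards [Ioi_mem_nhds hs] with u hu
    refine Finset.sum_congr rfl fun k hk => ?_
    rw [Real.mul_rpow (le_of_lt hc) (le_of_lt (show (0:ℝ) < u from hu))]
    ring
  rw [hht.iteratedDeriv_eq j]
  exact iteratedDeriv_sum_rpow (Finset.Icc 1 q)
    (fun k => gam α k * (t ^ ((-2:ℝ)/α)) ^ (-(k:ℝ) * α / 2 - 1))
    (fun k => -(k:ℝ) * α / 2 - 1) j _ hs

lemma transform (α : ℝ) (hα : 0 < α) (d : ℕ) (hd : 1 ≤ d)
    (x y : EuclideanSpace ℝ (Fin d)) (q : ℕ) (hq : 0 < q) (a : ℕ → ℝ)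
    (ha : RealizesScalingDerivIdentity (2/α) q a) (M : ℝ) (hM : 0 < M)
    (t : ℝ) (ht : 0 < t) :
    t ^ (-(q : ℝ) - 2 / α) *
        ∑ j ∈ Finset.range (q + 1),
          a j * ∫ s in Set.Ioi (M * t ^ (2 / α)),
            s ^ j * gauss d s x y *
              iteratedDeriv j
                (fun s' : ℝ => ∑ k ∈ Finset.Icc 1 q,
                  gam α k * (t ^ (-2 / α) * s') ^ (-(k : ℝ) * α / 2 - 1)) s
      = (q.factorial : ℝ) * gam α q *
          ∫ s in Set.Ioi (M * t ^ (2 / α)), s ^ (-(q:ℝ) * α / 2 - 1) * gauss d s x y := by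
  have hc0 : (0:ℝ) < M * t ^ ((2:ℝ) / α) := mul_pos hM (Real.rpow_pos_of_pos ht _)
  set c0 : ℝ := M * t ^ ((2:ℝ) / α)
  have hint : ∀ j, IntegrableOn (fun s : ℝ => s ^ j * gauss d s x y *
      iteratedDeriv j (fun s' : ℝ => ∑ k ∈ Finset.Icc 1 q,
        gam α k * (t ^ (-2 / α) * s') ^ (-(k : ℝ) * α / 2 - 1)) s) (Ioi c0) := by
    intro j
    have hbase : IntegrableOn (fun s : ℝ => ∑ k ∈ Finset.Icc 1 q,
        ((gam α k * (t ^ ((-2:ℝ)/α)) ^ (-(k:ℝ) * α / 2 - 1)) *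
          (∏ i ∈ Finset.range j, ((-(k:ℝ) * α / 2 - 1) - i))) *
          (s ^ (-(k:ℝ) * α / 2 - 1) * gauss d s x y)) (Ioi c0) := by
      refine integrable_finset_sum _ fun k _ => ?_
      refine Integrable.const_mul ?_ _
      refine integrableOn_rpow_gauss_Ioi d hd x y _ ?_ c0 hc0
      have h1 : (0:ℝ) ≤ (k:ℝ) * α / 2 := by positivity
      linarith
    refine hbase.congr_fun ?_ measurableSet_Ioi
    intro s hs
    have hs0 : (0:ℝ) < s := lt_trans hc0 hs
    beta_reduce
    rw [Dh_eval α q t ht j s hs0, Finset.mul_sum]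
    refine Finset.sum_congr rfl fun k hk => ?_
    have e2 : (s:ℝ) ^ j * s ^ ((-(k:ℝ) * α / 2 - 1) - (j:ℝ)) = s ^ (-(k:ℝ) * α / 2 - 1) := by
      rw [← Real.rpow_natCast s j, ← Real.rpow_add hs0]
      rw [show (j:ℝ) + ((-(k:ℝ) * α / 2 - 1) - (j:ℝ)) = -(k:ℝ) * α / 2 - 1 by ring]
    calc (gam α k * (t ^ ((-2:ℝ)/α)) ^ (-(k:ℝ) * α / 2 - 1) *
            (∏ i ∈ Finset.range j, ((-(k:ℝ) * α / 2 - 1) - i))) *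
          (s ^ (-(k:ℝ) * α / 2 - 1) * gauss d s x y)
        = (gam α k * (t ^ ((-2:ℝ)/α)) ^ (-(k:ℝ) * α / 2 - 1) *
            (∏ i ∈ Finset.range j, ((-(k:ℝ) * α / 2 - 1) - i))) *
          ((s ^ j * s ^ ((-(k:ℝ) * α / 2 - 1) - (j:ℝ))) * gauss d s x y) := by rw [e2]
      _ = s ^ j * gauss d s x y *
          ((gam α k * (t ^ ((-2:ℝ)/α)) ^ (-(k:ℝ) * α / 2 - 1)) *
            (∏ i ∈ Finset.range j, ((-(k:ℝ) * α / 2 - 1) - i)) *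
            s ^ ((-(k:ℝ) * α / 2 - 1) - (j:ℝ))) := by ring
  calc t ^ (-(q : ℝ) - 2 / α) *
        ∑ j ∈ Finset.range (q + 1),
          a j * ∫ s in Set.Ioi c0,
            s ^ j * gauss d s x y *
              iteratedDeriv j
                (fun s' : ℝ => ∑ k ∈ Finset.Icc 1 q,
                  gam α k * (t ^ (-2 / α) * s') ^ (-(k : ℝ) * α / 2 - 1)) s
      = ∑ j ∈ Finset.range (q + 1), ∫ s in Set.Ioi c0,
          (a j * t ^ (-(q : ℝ) - 2 / α)) *
            (s ^ j * gauss d s x y *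
              iteratedDeriv j
                (fun s' : ℝ => ∑ k ∈ Finset.Icc 1 q,
                  gam α k * (t ^ (-2 / α) * s') ^ (-(k : ℝ) * α / 2 - 1)) s) := by
        rw [Finset.mul_sum]
        refine Finset.sum_congr rfl fun j _ => ?_
        rw [integral_const_mul]
        ring
    _ = ∫ s in Set.Ioi c0, ∑ j ∈ Finset.range (q + 1),
          (a j * t ^ (-(q : ℝ) - 2 / α)) *
            (s ^ j * gauss d s x y *
              iteratedDeriv j
                (fun s' : ℝ => ∑ k ∈ Finset.Icc 1 q,
                  gam α k * (t ^ (-2 / α) * s') ^ (-(k : ℝ) * α / 2 - 1)) s) := by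
        exact (integral_finset_sum _ fun j _ => ((hint j).const_mul _)).symm
    _ = ∫ s in Set.Ioi c0, (q.factorial : ℝ) * gam α q *
          (s ^ (-(q:ℝ) * α / 2 - 1) * gauss d s x y) := by
        refine setIntegral_congr_fun measurableSet_Ioi fun s hs => ?_
        have hs0 : (0:ℝ) < s := lt_trans hc0 hs
        have hkey := key_pointwise α hα q hq a ha t ht s hs0
        calc ∑ j ∈ Finset.range (q + 1),
              (a j * t ^ (-(q : ℝ) - 2 / α)) *
                (s ^ j * gauss d s x y *
                  iteratedDeriv j
                    (fun s' : ℝ => ∑ k ∈ Finset.Icc 1 q,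
                      gam α k * (t ^ (-2 / α) * s') ^ (-(k : ℝ) * α / 2 - 1)) s)
            = (∑ j ∈ Finset.range (q+1), a j * t ^ (-(q:ℝ) - 2/α) * s ^ j *
                iteratedDeriv j (fun s' : ℝ => ∑ k ∈ Finset.Icc 1 q,
                  gam α k * (t ^ (-2/α) * s') ^ (-(k:ℝ) * α / 2 - 1)) s) *
                gauss d s x y := by
              rw [Finset.sum_mul]
              exact Finset.sum_congr rfl fun j _ => by ring
          _ = (q.factorial : ℝ) * gam α q *
              (s ^ (-(q:ℝ) * α / 2 - 1) * gauss d s x y) := by rw [hkey]; ring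
    _ = (q.factorial : ℝ) * gam α q *
          ∫ s in Set.Ioi c0, s ^ (-(q:ℝ) * α / 2 - 1) * gauss d s x y := by
        rw [integral_const_mul]

end Aux

/-- Lemma 3.3: the head part of the series is uniformly bounded for `0 < t ≤ 1`,
`y ∈ Dᶜ`, and converges, as `t → 0⁺`, to `q! γ_q ∫_0^∞ s^{-qα/2-1} g(s,x,y) ds`. -/

theorem stmt17 (m : ℕ) (hm : 2 < m) (α : ℝ) (hα : α = 2 / m) (d : ℕ) (hd : 1 ≤ d)
    (D : Set (EuclideanSpace ℝ (Fin d))) (hDo : IsOpen D) (hDb : Bornology.IsBounded D)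
    (x : EuclideanSpace ℝ (Fin d)) (hx : x ∈ D)
    (q : ℕ) (hq : 0 < q) (M : ℝ) (hM : 1 < M) (a : ℕ → ℝ)
    (ha : RealizesScalingDerivIdentity (2 / α) q a) :
    (∃ C : ℝ, ∀ t ∈ Set.Ioc (0 : ℝ) 1, ∀ y ∈ Dᶜ,
      |t ^ (-(q : ℝ) - 2 / α) *
          ∑ j ∈ Finset.range (q + 1),
            a j * ∫ s in Set.Ioi (M * t ^ (2 / α)),
              s ^ j * gauss d s x y *
                iteratedDeriv j
                  (fun s' : ℝ => ∑ k ∈ Finset.Icc 1 q,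
                    gam α k * (t ^ (-2 / α) * s') ^ (-(k : ℝ) * α / 2 - 1)) s| ≤ C) ∧
    ∀ y ∈ Dᶜ,
      Filter.Tendsto
        (fun t : ℝ => t ^ (-(q : ℝ) - 2 / α) *
          ∑ j ∈ Finset.range (q + 1),
            a j * ∫ s in Set.Ioi (M * t ^ (2 / α)),
              s ^ j * gauss d s x y *
                iteratedDeriv j
                  (fun s' : ℝ => ∑ k ∈ Finset.Icc 1 q,
                    gam α k * (t ^ (-2 / α) * s') ^ (-(k : ℝ) * α / 2 - 1)) s)
        (nhdsWithin 0 (Set.Ioi 0))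
        (nhds ((q.factorial : ℝ) * gam α q *
          ∫ s in Set.Ioi (0 : ℝ), s ^ (-(q : ℝ) * α / 2 - 1) * gauss d s x y)) :=  by
  have hm0 : (0:ℝ) < (m:ℝ) := by
    have : 0 < m := lt_trans (by norm_num) hm
    exact_mod_cast this
  have hα0 : 0 < α := by rw [hα]; positivity
  have hM0 : 0 < M := lt_trans one_pos hM
  obtain ⟨ε, hε, hball⟩ := Metric.isOpen_iff.mp hDo x hx
  have hdist : ∀ y ∈ Dᶜ, ε ≤ ‖x - y‖ := by
    intro y hy
    by_contra hcon
    push_neg at hcon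
    apply hy
    apply hball
    rw [Metric.mem_ball, dist_eq_norm, ← norm_neg]
    simpa [neg_sub] using hcon
  have hd' : (1:ℝ) ≤ (d:ℝ) := by exact_mod_cast hd
  set pq : ℝ := -(q:ℝ) * α / 2 - 1 with hpqdef
  have hpq : pq ≤ -1 := by
    have h1 : (0:ℝ) ≤ (q:ℝ) * α / 2 := by positivity
    rw [hpqdef]; nlinarith
  set Gb : ℝ → ℝ := fun s => (4*π) ^ (-(d:ℝ)/2) * (s ^ (pq - (d:ℝ)/2) *
    Real.exp (-(ε^2/4)/s)) with hGbdef
  have hGb_int : IntegrableOn Gb (Ioi (0:ℝ)) := by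
    refine Integrable.const_mul ?_ _
    refine integrableOn_rpow_exp_inv _ _ ?_ (by positivity)
    have hq0 : 0 ≤ (q:ℝ) * α / 2 := by positivity
    rw [hpqdef]
    linarith
  have hGb_nonneg : ∀ s : ℝ, 0 < s → 0 ≤ Gb s := by
    intro s hs
    rw [hGbdef]
    have := Real.rpow_pos_of_pos hs (pq - (d:ℝ)/2)
    positivity
  have hF_int : ∀ y, ε ≤ ‖x - y‖ → IntegrableOn (fun s : ℝ => s ^ pq * gauss d s x y)
      (Ioi (0:ℝ)) := by
    intro y hy
    refine Integrable.mono' hGb_int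
      ((continuousOn_rpow_gauss d x y pq).aestronglyMeasurable measurableSet_Ioi) ?_
    filter_upwards [ae_restrict_mem measurableSet_Ioi] with s hs
    have hs0 : (0:ℝ) < s := hs
    have hnn : 0 ≤ s ^ pq * gauss d s x y :=
      mul_nonneg (le_of_lt (Real.rpow_pos_of_pos hs0 _)) (gauss_nonneg d x y s hs0)
    rw [Real.norm_eq_abs, abs_of_nonneg hnn]
    exact rpow_gauss_le d x y ε pq hε hy s hs0
  constructor
  · -- uniform bound
    refine ⟨|(q.factorial : ℝ) * gam α q| * ∫ s in Set.Ioi (0:ℝ), Gb s, ?_⟩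
    rintro t ⟨ht0, _⟩ y hy
    have hxy := hdist y hy
    rw [transform α hα0 d hd x y q hq a ha M hM0 t ht0]
    have hc0 : (0:ℝ) < M * t ^ ((2:ℝ)/α) := mul_pos hM0 (Real.rpow_pos_of_pos ht0 _)
    rw [abs_mul]
    refine mul_le_mul_of_nonneg_left ?_ (abs_nonneg _)
    calc |∫ s in Set.Ioi (M * t ^ ((2:ℝ)/α)), s ^ pq * gauss d s x y|
        ≤ ∫ s in Set.Ioi (M * t ^ ((2:ℝ)/α)), Gb s := by
          rw [← Real.norm_eq_abs]
          refine norm_integral_le_of_norm_le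
            (hGb_int.mono_set (Ioi_subset_Ioi (le_of_lt hc0))) ?_
          filter_upwards [ae_restrict_mem measurableSet_Ioi] with s hs
          have hs0 : (0:ℝ) < s := lt_trans hc0 hs
          have hnn : 0 ≤ s ^ pq * gauss d s x y :=
            mul_nonneg (le_of_lt (Real.rpow_pos_of_pos hs0 _)) (gauss_nonneg d x y s hs0)
          rw [Real.norm_eq_abs, abs_of_nonneg hnn]
          exact rpow_gauss_le d x y ε pq hε hxy s hs0
      _ ≤ ∫ s in Set.Ioi (0:ℝ), Gb s := by
          refine setIntegral_mono_set hGb_int ?_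
            (HasSubset.Subset.eventuallyLE (Ioi_subset_Ioi (le_of_lt hc0)))
          filter_upwards [ae_restrict_mem measurableSet_Ioi] with s hs
          exact hGb_nonneg s hs
  · -- convergence
    intro y hy
    have hxy := hdist y hy
    have htendc : Tendsto (fun t : ℝ => M * t ^ ((2:ℝ)/α)) (nhdsWithin 0 (Set.Ioi 0))
        (nhds 0) := by
      have h1 : Tendsto (fun t : ℝ => t ^ ((2:ℝ)/α)) (nhdsWithin 0 (Set.Ioi 0)) (nhds 0) := by
        have hc := (Real.continuousAt_rpow_const 0 ((2:ℝ)/α)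
          (Or.inr (by positivity))).continuousWithinAt (s := Set.Ioi (0:ℝ))
        have h0 : (0:ℝ) ^ ((2:ℝ)/α) = 0 := Real.zero_rpow (by positivity)
        simpa [ContinuousWithinAt, h0] using hc
      have := h1.const_mul M
      simpa using this
    have hF_aesm : AEStronglyMeasurable (fun s : ℝ => s ^ pq * gauss d s x y)
        (volume.restrict (Ioi (0:ℝ))) :=
      (continuousOn_rpow_gauss d x y pq).aestronglyMeasurable measurableSet_Ioi
    have hDCT : Tendsto
        (fun t : ℝ => ∫ s, (Set.Ioi (M * t ^ ((2:ℝ)/α))).indicator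
          (fun s : ℝ => s ^ pq * gauss d s x y) s ∂(volume.restrict (Ioi (0:ℝ))))
        (nhdsWithin 0 (Set.Ioi 0))
        (nhds (∫ s, s ^ pq * gauss d s x y ∂(volume.restrict (Ioi (0:ℝ))))) := by
      refine tendsto_integral_filter_of_dominated_convergence
        (fun s => ‖s ^ pq * gauss d s x y‖) ?_ ?_ ((hF_int y hxy).norm) ?_
      · exact Eventually.of_forall fun t => hF_aesm.indicator measurableSet_Ioi
      · refine Eventually.of_forall fun t => Eventually.of_forall fun (s : ℝ) => ?_
        exact norm_indicator_le_norm_self (fun s : ℝ => s ^ pq * gauss d s x y) s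
      · filter_upwards [self_mem_ae_restrict measurableSet_Ioi] with s hs
        have hs0 : (0:ℝ) < s := hs
        refine Tendsto.congr' ?_ tendsto_const_nhds
        filter_upwards [htendc.eventually (eventually_lt_nhds hs0)] with t' ht'
        exact (Set.indicator_of_mem
          (show s ∈ Set.Ioi (M * t' ^ ((2:ℝ)/α)) from ht')
          (fun s : ℝ => s ^ pq * gauss d s x y)).symm
    refine Tendsto.congr' ?_ (hDCT.const_mul ((q.factorial : ℝ) * gam α q))
    filter_upwards [self_mem_nhdsWithin] with t ht
    have ht0 : (0:ℝ) < t := ht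
    have hc0 : (0:ℝ) < M * t ^ ((2:ℝ)/α) := mul_pos hM0 (Real.rpow_pos_of_pos ht0 _)
    rw [transform α hα0 d hd x y q hq a ha M hM0 t ht0]
    rw [integral_indicator measurableSet_Ioi,
        Measure.restrict_restrict measurableSet_Ioi,
        inter_eq_self_of_subset_left (Ioi_subset_Ioi (le_of_lt hc0)), hpqdef]
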